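/- arXiv:1011.5351 — 4 statements merged into one kernel-verified Lean document; each statement's English description precedes it below -/
import Mathlib

section
/- Let r_1 ≥ ... ≥ r_m and c_1 ≥ ... ≥ c_n be consistent monotone line sums with r_1 = n and c_1 = m, b_i = #{j : c_j ≥ i}, and α = (1/2)Σ_{i=1}^m |r_i − b_i|. Then α ≤ (m−1)(n−1)/4. -/
/-!
Counting the points of `F` in the first `k` rows column by column gives the dominance
`∑_{i ≤ k} rᵢ ≤ ∑_{i ≤ k} bᵢ`, with equality for `k = m`; hence `α = ∑ (rᵢ - bᵢ)⁺`.
Since `r` is nonincreasing, Abel summation turns the dominance into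
`∑ (rᵢ - bᵢ)(rᵢ - 1) ≤ 0`, and together with the pointwise estimate
`(n - 1)(rᵢ - bᵢ)⁺ ≤ (rᵢ - 1)(n - bᵢ)` this gives `(n - 1) α ≤ ∑ (rᵢ - 1)(n - rᵢ)`.
By AM-GM each summand is at most `(n - 1)² / 4`, and the first one vanishes because `r₁ = n`.
-/

open Finset

/-- Number of points of `F` in row `i`. -/
def rowSum (F : Finset (ℤ × ℤ)) (i : ℤ) : ℕ := (F.filter fun p => p.1 = i).card

/-- Number of points of `F` in column `j`. -/
def colSum (F : Finset (ℤ × ℤ)) (j : ℤ) : ℕ := (F.filter fun p => p.2 = j).card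

lemma map_castEmbedding_Icc (a b : ℕ) : (Icc a b).map Nat.castEmbedding = Icc (a : ℤ) b := by
  rw [← coe_inj, coe_map, coe_Icc, coe_Icc]
  exact Nat.image_cast_int_Icc a b

lemma sum_card_fiberwise_natCast_eq_card_filter {α : Type*} (s : Finset α) (g : α → ℤ) (a b : ℕ) :
    ∑ i ∈ Icc a b, #{x ∈ s | g x = i} = #{x ∈ s | g x ∈ Icc (a : ℤ) b} := by
  rw [← sum_card_fiberwise_eq_card_filter, ← map_castEmbedding_Icc, sum_map]
  rfl

lemma card_Icc_one_natCast (k : ℕ) : #(Icc (1 : ℤ) k) = k := by simp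

def conjugate (n : ℕ) (c : ℕ → ℕ) (i : ℕ) : ℕ := #{j ∈ Icc 1 n | i ≤ c j}

lemma sum_conjugate (n : ℕ) (c : ℕ → ℕ) (k : ℕ) :
    ∑ i ∈ Icc 1 k, conjugate n c i = ∑ j ∈ Icc 1 n, min (c j) k := by
  simp only [conjugate, card_filter]
  rw [sum_comm]
  refine sum_congr rfl fun j _ => ?_
  rw [← card_filter, show {i ∈ Icc 1 k | i ≤ c j} = Icc 1 (min (c j) k) by ext; simp; omega,
    Nat.card_Icc, Nat.add_sub_cancel]

lemma conjugate_le (n : ℕ) (c : ℕ → ℕ) (i : ℕ) : conjugate n c i ≤ n :=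
  (card_filter_le _ _).trans_eq (Nat.card_Icc 1 n)

lemma conjugate_pos {n : ℕ} {c : ℕ → ℕ} {i : ℕ} (hn : 1 ≤ n) (hi : i ≤ c 1) :
    0 < conjugate n c i :=
  card_pos.2 ⟨1, mem_filter.2 ⟨mem_Icc.2 ⟨le_rfl, hn⟩, hi⟩⟩

section LineSums

lemma sum_rowSum (F : Finset (ℤ × ℤ)) (k : ℕ) :
    ∑ i ∈ Icc 1 k, rowSum F i = #{p ∈ F | p.1 ∈ Icc (1 : ℤ) k} :=
  sum_card_fiberwise_natCast_eq_card_filter F Prod.fst 1 k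

lemma sum_colSum (F : Finset (ℤ × ℤ)) (k : ℕ) :
    ∑ j ∈ Icc 1 k, colSum F j = #{p ∈ F | p.2 ∈ Icc (1 : ℤ) k} :=
  sum_card_fiberwise_natCast_eq_card_filter F Prod.snd 1 k

variable {F G : Finset (ℤ × ℤ)}

lemma rowSum_le_card {t : Finset ℤ} (hF : ∀ p ∈ F, p.2 ∈ t) (i : ℤ) : rowSum F i ≤ #t :=
  card_le_card_of_injOn Prod.snd (fun p hp => hF p (mem_filter.1 hp).1)
    fun _ hp _ hq h => Prod.ext ((mem_filter.1 hp).2.trans (mem_filter.1 hq).2.symm) h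

lemma colSum_le_card {s : Finset ℤ} (hF : ∀ p ∈ F, p.1 ∈ s) (j : ℤ) : colSum F j ≤ #s :=
  card_le_card_of_injOn Prod.fst (fun p hp => hF p (mem_filter.1 hp).1)
    fun _ hp _ hq h => Prod.ext h ((mem_filter.1 hp).2.trans (mem_filter.1 hq).2.symm)

lemma colSum_mono (h : F ⊆ G) (j : ℤ) : colSum F j ≤ colSum G j :=
  card_le_card (filter_subset_filter _ h)

lemma rowSum_pos_of_colSum_eq_card {s : Finset ℤ} (hF : ∀ p ∈ F, p.1 ∈ s) {j : ℤ}
    (hj : colSum F j = #s) {i : ℤ} (hi : i ∈ s) : 0 < rowSum F i := by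
  by_contra! h0
  have hrow : ∀ p ∈ F, p.1 ≠ i := filter_eq_empty_iff.1 (card_eq_zero.1 (Nat.le_zero.1 h0))
  have hcol := colSum_le_card (fun p hp => mem_erase.2 ⟨hrow p hp, hF p hp⟩) j
  rw [card_erase_of_mem hi, hj] at hcol
  have := card_pos.2 ⟨i, hi⟩
  omega

variable {n : ℕ} {c : ℕ → ℕ}

lemma sum_rowSum_le_sum_conjugate (hF : ∀ p ∈ F, p.2 ∈ Icc (1 : ℤ) n)
    (hc : ∀ j ∈ Icc 1 n, colSum F j = c j) (k : ℕ) :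
    ∑ i ∈ Icc 1 k, rowSum F i ≤ ∑ i ∈ Icc 1 k, conjugate n c i := by
  set G := {p ∈ F | p.1 ∈ Icc (1 : ℤ) k}
  calc ∑ i ∈ Icc 1 k, rowSum F i = ∑ j ∈ Icc 1 n, colSum G j := by
        rw [sum_rowSum, sum_colSum, filter_true_of_mem fun p hp => hF p (mem_filter.1 hp).1]
    _ ≤ ∑ j ∈ Icc 1 n, min (c j) k := sum_le_sum fun j hj =>
        le_min ((colSum_mono (filter_subset _ _) j).trans_eq (hc j hj))
          ((colSum_le_card (fun p hp => (mem_filter.1 hp).2) j).trans_eq (card_Icc_one_natCast k))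
    _ = _ := (sum_conjugate ..).symm

lemma sum_rowSum_eq_sum_conjugate {m : ℕ} (hF : F ⊆ Icc 1 (m : ℤ) ×ˢ Icc 1 (n : ℤ))
    (hc : ∀ j ∈ Icc 1 n, colSum F j = c j) :
    ∑ i ∈ Icc 1 m, rowSum F i = ∑ i ∈ Icc 1 m, conjugate n c i := by
  have hrow : ∀ p ∈ F, p.1 ∈ Icc (1 : ℤ) m := fun p hp => (mem_product.1 (hF hp)).1
  have hcol : ∀ p ∈ F, p.2 ∈ Icc (1 : ℤ) n := fun p hp => (mem_product.1 (hF hp)).2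
  calc ∑ i ∈ Icc 1 m, rowSum F i = #F := by rw [sum_rowSum, filter_true_of_mem hrow]
    _ = ∑ j ∈ Icc 1 n, colSum F j := by rw [sum_colSum, filter_true_of_mem hcol]
    _ = ∑ j ∈ Icc 1 n, min (c j) m := sum_congr rfl fun j hj => by
        rw [← hc j hj, min_eq_left ((colSum_le_card hrow j).trans_eq (card_Icc_one_natCast m))]
    _ = _ := (sum_conjugate ..).symm

end LineSums

section Majorization

variable {R : Type*} [CommRing R] [LinearOrder R] [IsStrictOrderedRing R]

lemma sum_mul_le_of_antitoneOn {d w : ℕ → R} {m : ℕ}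
    (hd : ∀ k < m, ∑ i ∈ Icc 1 k, d i ≤ 0) (hw : AntitoneOn w (Set.Icc 1 m)) :
    ∑ i ∈ Icc 1 m, d i * w i ≤ (∑ i ∈ Icc 1 m, d i) * w m := by
  induction m with
  | zero => simp
  | succ k ih =>
    rw [sum_Icc_succ_top (by omega), sum_Icc_succ_top (by omega), add_mul]
    have hk : (∑ i ∈ Icc 1 k, d i) * w k ≤ (∑ i ∈ Icc 1 k, d i) * w (k + 1) := by
      rcases Nat.eq_zero_or_pos k with rfl | hk
      · simp
      · exact mul_le_mul_of_nonpos_left (hw ⟨hk, by omega⟩ ⟨by omega, le_rfl⟩ (by omega))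
          (hd k (by omega))
    have := ih (fun j hj => hd j (by omega)) (hw.mono (Set.Icc_subset_Icc le_rfl (by omega)))
    linarith

lemma sub_one_mul_posPart_sub_le {n r b : R} (hr : 1 ≤ r) (hrn : r ≤ n) (hb : 1 ≤ b)
    (hbn : b ≤ n) : (n - 1) * (r - b)⁺ ≤ (r - 1) * (n - b) := by
  rcases le_total (r - b) 0 with h | h
  · rw [posPart_eq_zero.2 h, mul_zero]
    exact mul_nonneg (by linarith) (by linarith)
  · rw [posPart_eq_self.2 h]
    nlinarith [mul_nonneg (sub_nonneg.2 hb) (sub_nonneg.2 hrn)]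

lemma four_mul_sum_sub_one_mul_sub_le {r : ℕ → R} {m : ℕ} {n : R} (hr1 : r 1 = n) :
    4 * ∑ i ∈ Icc 1 m, (r i - 1) * (n - r i) ≤ (m - 1 : ℕ) * (n - 1) ^ 2 := by
  rw [← sum_erase _ (by rw [hr1, sub_self, mul_zero]), Icc_erase_left, mul_sum]
  calc _ ≤ #(Ioc 1 m) • (n - 1) ^ 2 := sum_le_card_nsmul _ _ _ fun i _ => by
          simpa [mul_assoc] using four_mul_le_sq_add (r i - 1) (n - r i)
    _ = _ := by rw [Nat.card_Ioc, nsmul_eq_mul]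

lemma sum_abs_eq_two_mul_sum_posPart {ι : Type*} {s : Finset ι} {d : ι → R}
    (h : ∑ i ∈ s, d i = 0) : ∑ i ∈ s, |d i| = 2 * ∑ i ∈ s, (d i)⁺ := by
  have h' : ∑ i ∈ s, (d i)⁺ - ∑ i ∈ s, (d i)⁻ = 0 := by
    rw [← sum_sub_distrib]; simpa only [posPart_sub_negPart] using h
  simp_rw [← posPart_add_negPart]
  rw [sum_add_distrib]
  linarith

theorem two_mul_sum_abs_sub_le {r b : ℕ → R} {m : ℕ} {n : R} (hn : 1 ≤ n)
    (hr : AntitoneOn r (Set.Icc 1 m)) (hr1 : r 1 = n)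
    (hrn : ∀ i ∈ Icc 1 m, 1 ≤ r i ∧ r i ≤ n) (hbn : ∀ i ∈ Icc 1 m, 1 ≤ b i ∧ b i ≤ n)
    (hdom : ∀ k < m, ∑ i ∈ Icc 1 k, r i ≤ ∑ i ∈ Icc 1 k, b i)
    (htot : ∑ i ∈ Icc 1 m, r i = ∑ i ∈ Icc 1 m, b i) :
    2 * ∑ i ∈ Icc 1 m, |r i - b i| ≤ (m - 1 : ℕ) * (n - 1) := by
  have hsum : ∑ i ∈ Icc 1 m, (r i - b i) = 0 := by rw [sum_sub_distrib, htot, sub_self]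
  have hweighted : ∑ i ∈ Icc 1 m, (r i - b i) * (r i - 1) ≤ 0 := by
    have := sum_mul_le_of_antitoneOn (d := fun i => r i - b i) (w := fun i => r i - 1)
      (fun k hk => by rw [sum_sub_distrib]; linarith [hdom k hk])
      (fun i hi j hj hij => sub_le_sub_right (hr hi hj hij) 1)
    rwa [hsum, zero_mul] at this
  have hexcess : (n - 1) * ∑ i ∈ Icc 1 m, (r i - b i)⁺ ≤ ∑ i ∈ Icc 1 m, (r i - 1) * (n - r i) :=
    calc (n - 1) * ∑ i ∈ Icc 1 m, (r i - b i)⁺ ≤ ∑ i ∈ Icc 1 m, (r i - 1) * (n - b i) := by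
          rw [mul_sum]
          exact sum_le_sum fun i hi =>
            sub_one_mul_posPart_sub_le (hrn i hi).1 (hrn i hi).2 (hbn i hi).1 (hbn i hi).2
      _ = ∑ i ∈ Icc 1 m, (r i - 1) * (n - r i) + ∑ i ∈ Icc 1 m, (r i - b i) * (r i - 1) := by
          rw [← sum_add_distrib]; exact sum_congr rfl fun i _ => by ring
      _ ≤ _ := by linarith
  have hquad := four_mul_sum_sub_one_mul_sub_le (m := m) hr1
  rcases hn.lt_or_eq with hn | rfl
  · rw [sum_abs_eq_two_mul_sum_posPart hsum]
    refine le_of_mul_le_mul_left ?_ (sub_pos.2 hn)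
    linarith
  · rw [sum_eq_zero fun i hi => by
      rw [show r i - b i = 0 by linarith [hrn i hi, hbn i hi], abs_zero]]
    simp

end Majorization

theorem alpha_le_general (m n : ℕ) (r c : ℕ → ℕ) (hn : 1 ≤ n)
    (hr : ∀ i i' : ℕ, 1 ≤ i → i ≤ i' → i' ≤ m → r i' ≤ r i)
    (hr1 : r 1 = n) (hc1 : c 1 = m)
    (hcons : ∃ F : Finset (ℤ × ℤ),
      F ⊆ Finset.Icc 1 (m : ℤ) ×ˢ Finset.Icc 1 (n : ℤ) ∧
      (∀ i ∈ Finset.Icc 1 m, rowSum F i = r i) ∧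
      (∀ j ∈ Finset.Icc 1 n, colSum F j = c j))
    (b : ℕ → ℕ)
    (hb : ∀ i : ℕ, b i = ((Finset.Icc 1 n).filter fun j => i ≤ c j).card) :
    2 * ∑ i ∈ Finset.Icc 1 m, ((r i : ℤ) - b i).natAbs ≤ (m - 1) * (n - 1) := by
  obtain rfl : b = conjugate n c := funext hb
  obtain ⟨F, hF, hrow, hcol⟩ := hcons
  have hFrow : ∀ p ∈ F, p.1 ∈ Icc (1 : ℤ) m := fun p hp => (mem_product.1 (hF hp)).1
  have hFcol : ∀ p ∈ F, p.2 ∈ Icc (1 : ℤ) n := fun p hp => (mem_product.1 (hF hp)).2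
  have hrF : ∀ k ≤ m, ∑ i ∈ Icc 1 k, r i = ∑ i ∈ Icc 1 k, rowSum F i := fun k hk =>
    sum_congr rfl fun i hi => (hrow i (Icc_subset_Icc le_rfl hk hi)).symm
  have hcol1 : colSum F 1 = #(Icc (1 : ℤ) m) := by
    rw [card_Icc_one_natCast, ← hc1]
    exact_mod_cast hcol 1 (by simp [hn])
  have hr_bounds : ∀ i ∈ Icc 1 m, 1 ≤ r i ∧ r i ≤ n := fun i hi => by
    rw [← hrow i hi]
    exact ⟨rowSum_pos_of_colSum_eq_card hFrow hcol1 (by simpa using hi),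
      (rowSum_le_card hFcol i).trans_eq (card_Icc_one_natCast n)⟩
  have hb_bounds : ∀ i ∈ Icc 1 m, 1 ≤ conjugate n c i ∧ conjugate n c i ≤ n := fun i hi =>
    ⟨conjugate_pos hn (hc1 ▸ (mem_Icc.1 hi).2), conjugate_le n c i⟩
  zify [hn]
  refine two_mul_sum_abs_sub_le (by exact_mod_cast hn)
    (fun i hi j hj hij => Nat.cast_le.2 (hr i j hi.1 hij hj.2)) (by exact_mod_cast hr1)
    (fun i hi => by exact_mod_cast hr_bounds i hi)
    (fun i hi => by exact_mod_cast hb_bounds i hi)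
    (fun k hk => ?_) ?_
  · exact_mod_cast (hrF k hk.le).trans_le (sum_rowSum_le_sum_conjugate hFcol hcol k)
  · exact_mod_cast (hrF m le_rfl).trans (sum_rowSum_eq_sum_conjugate hF hcol)

/-- For consistent monotone line sums with `r 1 = n` and `c 1 = m`, the quantity
`α = (1/2) ∑ |rᵢ - bᵢ|` satisfies `α ≤ (m-1)(n-1)/4`, formalized as
`2 ∑ |rᵢ - bᵢ| ≤ (m-1)(n-1)`. -/
theorem alpha_le (m n : ℕ) (r c : ℕ → ℕ) (hm : 1 ≤ m) (hn : 1 ≤ n)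
    (hr : ∀ i i' : ℕ, 1 ≤ i → i ≤ i' → i' ≤ m → r i' ≤ r i)
    (hc : ∀ j j' : ℕ, 1 ≤ j → j ≤ j' → j' ≤ n → c j' ≤ c j)
    (hr1 : r 1 = n) (hc1 : c 1 = m)
    (hcons : ∃ F : Finset (ℤ × ℤ),
      F ⊆ Finset.Icc 1 (m : ℤ) ×ˢ Finset.Icc 1 (n : ℤ) ∧
      (∀ i ∈ Finset.Icc 1 m, rowSum F i = r i) ∧
      (∀ j ∈ Finset.Icc 1 n, colSum F j = c j))
    (b : ℕ → ℕ)
    (hb : ∀ i : ℕ, b i = ((Finset.Icc 1 n).filter fun j => i ≤ c j).card) :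
    2 * ∑ i ∈ Finset.Icc 1 m, ((r i : ℤ) - b i).natAbs ≤ (m - 1) * (n - 1) :=
  alpha_le_general m n r c hn hr hr1 hc1 hcons b hb
end

section
/- Let F ⊆ Z² be finite with row sums r_i supported on rows 1..m and column sums c_j supported on columns 1..n, where r_1 ≥ ... ≥ r_m. Define F' = F ∪ {(0,j) : 0 ≤ j ≤ n} ∪ {(i,0) : 1 ≤ i ≤ m}. Then L_h(F') = L_h(F) + 2(n + 1 − r_1) and L_v(F') = L_v(F) + 2(m + 1 − c_1), provided row 1 of F is contained in columns 1..n and column 1 of F in rows 1..m. -/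
/-!
With `e = (1, 0)`, `Lh F` counts the points of `F` leaving `F` under `+ e` plus the points
outside `F` entering it, so `Lh F = 2 #F - 2 a(F, F)` where `a(A, B) = #{p ∈ A | p + e ∈ B}`
is additive in each argument over disjoint unions. Adjoining the border `B` adds `m + n + 1`
points and `a(B, B) + a(B, F) + a(F, B) = m + r₁ + 0` adjacent pairs. `Lv` is `Lh` of the
transposed set, and transposition carries the border for `(m, n)` onto the border for `(n, m)`.
-/

open Finset

/-- Length of the horizontal boundary of `F`: the number of vertically adjacent pairs
of lattice points with exactly one of the two points in `F`. -/
def Lh (F : Finset (ℤ × ℤ)) : ℕ :=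
  ((F ∪ F.image fun p => (p.1 - 1, p.2)).filter
    fun p => decide (p ∈ F) ≠ decide ((p.1 + 1, p.2) ∈ F)).card

/-- Length of the vertical boundary of `F`: the number of horizontally adjacent pairs
of lattice points with exactly one of the two points in `F`. -/
def Lv (F : Finset (ℤ × ℤ)) : ℕ :=
  ((F ∪ F.image fun p => (p.1, p.2 - 1)).filter
    fun p => decide (p ∈ F) ≠ decide ((p.1, p.2 + 1) ∈ F)).card

section Translate

variable {α β : Type*} [AddCommGroup α] [DecidableEq α] [AddCommGroup β] [DecidableEq β]

def adjCount (e : α) (A B : Finset α) : ℕ := #{p ∈ A | p + e ∈ B}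

def edgeBoundary (e : α) (F : Finset α) : ℕ :=
  #{p ∈ F ∪ F.image (· - e) | ¬(p ∈ F ↔ p + e ∈ F)}

lemma adjCount_union_left {e : α} {A A' : Finset α} (B : Finset α) (h : Disjoint A A') :
    adjCount e (A ∪ A') B = adjCount e A B + adjCount e A' B := by
  rw [adjCount, filter_union, card_union_of_disjoint (disjoint_filter_filter h)]; rfl

lemma adjCount_union_right {e : α} (A : Finset α) {B B' : Finset α} (h : Disjoint B B') :
    adjCount e A (B ∪ B') = adjCount e A B + adjCount e A B' := by
  simp only [adjCount, mem_union, filter_or]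
  exact card_union_of_disjoint (disjoint_filter.2 fun _ _ hB => disjoint_left.1 h hB)

lemma adjCount_image (φ : α ≃+ β) (e : α) (A B : Finset α) :
    adjCount (φ e) (A.image φ) (B.image φ) = adjCount e A B := by
  simp only [adjCount, filter_image, ← map_add, φ.injective.mem_finset_image]
  exact card_image_of_injective _ φ.injective

lemma edgeBoundary_add_two_mul_adjCount (e : α) (F : Finset α) :
    edgeBoundary e F + 2 * adjCount e F F = 2 * #F := by
  set T := F.image (· - e)
  have hmemT : ∀ p, p ∈ T ↔ p + e ∈ F := fun p => by simp [T, sub_eq_iff_eq_add]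
  have hsplit : {p ∈ F ∪ T | ¬(p ∈ F ↔ p + e ∈ F)} = {p ∈ F | p + e ∉ F} ∪ {p ∈ T | p ∉ F} := by
    ext p; simp only [mem_filter, mem_union, hmemT]; tauto
  have hdisj : Disjoint {p ∈ F | p + e ∉ F} {p ∈ T | p ∉ F} :=
    disjoint_left.2 fun p h1 h2 => (mem_filter.1 h2).2 (mem_filter.1 h1).1
  have hTF : {p ∈ T | p ∈ F} = {p ∈ F | p + e ∈ F} := by
    ext p; simp only [mem_filter, hmemT]; tauto
  have hcardF := card_filter_add_card_filter_not (s := F) (fun p => p + e ∈ F)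
  have hcardT := card_filter_add_card_filter_not (s := T) (· ∈ F)
  rw [hTF, card_image_of_injective _ sub_left_injective] at hcardT
  rw [edgeBoundary, hsplit, card_union_of_disjoint hdisj, adjCount]
  omega

lemma edgeBoundary_image (φ : α ≃+ β) (e : α) (F : Finset α) :
    edgeBoundary (φ e) (F.image φ) = edgeBoundary e F := by
  have h := edgeBoundary_add_two_mul_adjCount (φ e) (F.image φ)
  rw [adjCount_image, card_image_of_injective _ φ.injective] at h
  have := edgeBoundary_add_two_mul_adjCount e F
  omega

end Translate

lemma Lh_eq_edgeBoundary (F : Finset (ℤ × ℤ)) : Lh F = edgeBoundary (1, 0) F := by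
  unfold Lh edgeBoundary
  congr 1
  ext ⟨a, b⟩
  simp [Prod.ext_iff]

lemma Lv_eq_edgeBoundary (F : Finset (ℤ × ℤ)) : Lv F = edgeBoundary (0, 1) F := by
  unfold Lv edgeBoundary
  congr 1
  ext ⟨a, b⟩
  simp [Prod.ext_iff]

noncomputable def border (m n : ℕ) : Finset (ℤ × ℤ) :=
  (Icc (0 : ℤ) n).image (fun j => (0, j)) ∪ (Icc (1 : ℤ) m).image (fun i => (i, 0))

lemma mem_border {m n : ℕ} {p : ℤ × ℤ} :
    p ∈ border m n ↔ (p.1 = 0 ∧ 0 ≤ p.2 ∧ p.2 ≤ n) ∨ (1 ≤ p.1 ∧ p.1 ≤ m ∧ p.2 = 0) := by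
  obtain ⟨a, b⟩ := p
  simp only [border, mem_union, mem_image, mem_Icc, Prod.mk.injEq]
  constructor
  · rintro (⟨j, hj, rfl, rfl⟩ | ⟨i, hi, rfl, rfl⟩) <;> simp_all
  · rintro (⟨rfl, hb⟩ | ⟨ha₁, ha₂, rfl⟩)
    exacts [Or.inl ⟨b, hb, rfl, rfl⟩, Or.inr ⟨a, ⟨ha₁, ha₂⟩, rfl, rfl⟩]

lemma card_border (m n : ℕ) : #(border m n) = m + n + 1 := by
  have hdisj : Disjoint ((Icc (0 : ℤ) n).image (fun j => ((0 : ℤ), j)))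
      ((Icc (1 : ℤ) m).image (fun i => (i, (0 : ℤ)))) := by
    simp only [disjoint_left, mem_image, mem_Icc]
    rintro _ ⟨j, -, rfl⟩ ⟨i, hi, hij⟩
    simp only [Prod.mk.injEq] at hij
    omega
  rw [border, card_union_of_disjoint hdisj, card_image_of_injective _ (Prod.mk_right_injective 0),
    card_image_of_injective _ (Prod.mk_left_injective 0)]
  simp only [Int.card_Icc]
  omega

lemma image_swap_border (m n : ℕ) : (border m n).image Prod.swap = border n m := by
  ext ⟨a, b⟩
  simp only [mem_image, mem_border, Prod.exists, Prod.swap_prod_mk, Prod.mk.injEq]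
  constructor
  · rintro ⟨x, y, h, rfl, rfl⟩; omega
  · intro h; exact ⟨b, a, by omega, rfl, rfl⟩

lemma adjCount_border_self (m n : ℕ) : adjCount (1, 0) (border m n) (border m n) = m := by
  have : {p ∈ border m n | p + (1, 0) ∈ border m n} = (Ico (0 : ℤ) m).image (fun i => (i, 0)) := by
    ext ⟨a, b⟩
    simp only [mem_filter, mem_border, Prod.mk_add_mk, mem_image, mem_Ico, Prod.mk.injEq]
    constructor
    · intro h; exact ⟨a, by omega, rfl, by omega⟩
    · rintro ⟨i, hi, rfl, rfl⟩; omega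
  rw [adjCount, this, card_image_of_injective _ (Prod.mk_left_injective 0)]
  simp

section Box

variable {m n : ℕ} {F : Finset (ℤ × ℤ)}

lemma bounds_of_mem (hF : F ⊆ Icc 1 (m : ℤ) ×ˢ Icc 1 (n : ℤ)) {p : ℤ × ℤ} (hp : p ∈ F) :
    1 ≤ p.1 ∧ p.1 ≤ m ∧ 1 ≤ p.2 ∧ p.2 ≤ n := by
  simpa only [mem_product, mem_Icc, and_assoc] using hF hp

lemma disjoint_border (hF : F ⊆ Icc 1 (m : ℤ) ×ˢ Icc 1 (n : ℤ)) : Disjoint F (border m n) :=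
  disjoint_left.2 fun p hp hb => by
    have := bounds_of_mem hF hp
    rw [mem_border] at hb
    omega

lemma rowSum_le (hF : F ⊆ Icc 1 (m : ℤ) ×ˢ Icc 1 (n : ℤ)) (i : ℤ) : rowSum F i ≤ n := by
  calc rowSum F i ≤ #((Icc (1 : ℤ) n).image (fun j => (i, j))) := by
        refine card_le_card fun p hp => ?_
        rw [mem_filter] at hp
        have := bounds_of_mem hF hp.1
        exact mem_image.2 ⟨p.2, mem_Icc.2 ⟨this.2.2.1, this.2.2.2⟩, Prod.ext hp.2.symm rfl⟩
    _ ≤ #(Icc (1 : ℤ) n) := card_image_le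
    _ = n := by simp

lemma adjCount_border_left (hF : F ⊆ Icc 1 (m : ℤ) ×ˢ Icc 1 (n : ℤ)) :
    adjCount (1, 0) (border m n) F = rowSum F 1 := by
  refine card_nbij' (· + (1, 0)) (· - (1, 0)) ?_ ?_ (fun _ _ => add_sub_cancel_right _ _)
    (fun _ _ => sub_add_cancel _ _)
  · rintro ⟨a, b⟩ hp
    simp only [mem_coe, mem_filter, mem_border, Prod.mk_add_mk] at hp ⊢
    have := bounds_of_mem hF hp.2
    exact ⟨hp.2, by simp only at this; omega⟩
  · rintro ⟨a, b⟩ hq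
    simp only [mem_coe, mem_filter] at hq ⊢
    refine ⟨?_, by rw [sub_add_cancel]; exact hq.1⟩
    have := bounds_of_mem hF hq.1
    simp only [mem_border, Prod.mk_sub_mk] at this ⊢
    omega

lemma adjCount_border_right (hF : F ⊆ Icc 1 (m : ℤ) ×ˢ Icc 1 (n : ℤ)) :
    adjCount (1, 0) F (border m n) = 0 := by
  refine card_eq_zero.2 (filter_eq_empty_iff.2 fun p hp hb => ?_)
  have := bounds_of_mem hF hp
  rw [mem_border] at hb
  simp only [Prod.fst_add, Prod.snd_add] at hb
  omega

lemma Lh_union_border (hF : F ⊆ Icc 1 (m : ℤ) ×ˢ Icc 1 (n : ℤ)) :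
    Lh (F ∪ border m n) = Lh F + 2 * (n + 1 - rowSum F 1) := by
  have hdisj := disjoint_border hF
  have hunion := edgeBoundary_add_two_mul_adjCount (1, 0) (F ∪ border m n)
  rw [adjCount_union_left _ hdisj, adjCount_union_right _ hdisj, adjCount_union_right _ hdisj,
    adjCount_border_left hF, adjCount_border_right hF, adjCount_border_self,
    card_union_of_disjoint hdisj, card_border] at hunion
  have hself := edgeBoundary_add_two_mul_adjCount (1, 0) F
  have := rowSum_le hF 1
  rw [Lh_eq_edgeBoundary, Lh_eq_edgeBoundary]
  omega

end Box

lemma Lv_eq_Lh_image_swap (F : Finset (ℤ × ℤ)) : Lv F = Lh (F.image Prod.swap) := by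
  rw [Lv_eq_edgeBoundary, Lh_eq_edgeBoundary,
    ← edgeBoundary_image (AddEquiv.prodComm : ℤ × ℤ ≃+ ℤ × ℤ)]
  simp [AddEquiv.coe_prodComm]

lemma colSum_eq_rowSum_image_swap (F : Finset (ℤ × ℤ)) (j : ℤ) :
    colSum F j = rowSum (F.image Prod.swap) j := by
  rw [colSum, rowSum, filter_image, card_image_of_injective _ Prod.swap_injective]
  rfl

theorem boundary_of_bordered_general (m n : ℕ)
    (F : Finset (ℤ × ℤ))
    (hF : F ⊆ Finset.Icc 1 (m : ℤ) ×ˢ Finset.Icc 1 (n : ℤ))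
    (F' : Finset (ℤ × ℤ))
    (hF' : F' = F ∪ (Finset.Icc (0 : ℤ) (n : ℤ)).image (fun j => ((0 : ℤ), j))
        ∪ (Finset.Icc (1 : ℤ) (m : ℤ)).image (fun i => (i, (0 : ℤ)))) :
    Lh F' = Lh F + 2 * (n + 1 - rowSum F 1) ∧
      Lv F' = Lv F + 2 * (m + 1 - colSum F 1) := by
  have hF'_eq : F' = F ∪ border m n := by rw [hF', union_assoc, border]
  have hswap : F.image Prod.swap ⊆ Icc 1 (n : ℤ) ×ˢ Icc 1 (m : ℤ) := by
    rw [← image_swap_product]; exact image_subset_image hF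
  refine ⟨hF'_eq ▸ Lh_union_border hF, ?_⟩
  rw [hF'_eq, Lv_eq_Lh_image_swap, Lv_eq_Lh_image_swap, image_union, image_swap_border,
    Lh_union_border hswap, colSum_eq_rowSum_image_swap]

/-- Let `F ⊆ {1,…,m} × {1,…,n}` have non-increasing row sums. Adjoining a full row
`{(0,j) : 0 ≤ j ≤ n}` and a full column `{(i,0) : 1 ≤ i ≤ m}` changes the boundary
lengths by `Lh F' = Lh F + 2(n + 1 - r₁)` and `Lv F' = Lv F + 2(m + 1 - c₁)`. -/
theorem boundary_of_bordered (m n : ℕ) (hm : 1 ≤ m) (hn : 1 ≤ n)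
    (F : Finset (ℤ × ℤ))
    (hF : F ⊆ Finset.Icc 1 (m : ℤ) ×ˢ Finset.Icc 1 (n : ℤ))
    (hr : ∀ i i' : ℕ, 1 ≤ i → i ≤ i' → i' ≤ m → rowSum F i' ≤ rowSum F i)
    (F' : Finset (ℤ × ℤ))
    (hF' : F' = F ∪ (Finset.Icc (0 : ℤ) (n : ℤ)).image (fun j => ((0 : ℤ), j))
        ∪ (Finset.Icc (1 : ℤ) (m : ℤ)).image (fun i => (i, (0 : ℤ)))) :
    Lh F' = Lh F + 2 * (n + 1 - rowSum F 1) ∧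
      Lv F' = Lv F + 2 * (m + 1 - colSum F 1) :=
  boundary_of_bordered_general m n F hF F' hF'
end

section
/- For odd n, with m = n and R = C = (n, n−1, n−1, n−3, n−3, ..., 4, 4, 2, 2), the conjugate sequence is (b_1,...,b_n) = (n, n, n−2, n−2, ..., 3, 3, 1) and α = (1/2)Σ|r_i − b_i| = (n−1)/2. -/
/-!
For `n = 2m + 1` the column sums are `c 1 = n` and `c j = n + 1 - 2⌊j/2⌋`, a staircase whose
steps have width two. Hence `i ≤ c j` holds exactly for `j ≤ b i` with `b i = n` for `i ≤ 2` and
`b i = n - 2⌊(i-1)/2⌋` otherwise, so the conjugate is the same staircase shifted by one place: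
`b 1 = c 1` and `|c i - b i| = 1` for every `2 ≤ i ≤ n`, giving `∑ |c i - b i| = n - 1`.
-/

open Finset

lemma card_filter_Icc_of_iff_le {n k : ℕ} {p : ℕ → Prop} [DecidablePred p] (hk : k ≤ n)
    (hp : ∀ j ∈ Icc 1 n, p j ↔ j ≤ k) : #{j ∈ Icc 1 n | p j} = k := by
  have hfilter : {j ∈ Icc 1 n | p j} = Icc 1 k := by
    ext j
    simp only [mem_filter, mem_Icc]
    constructor
    · rintro ⟨hj, hpj⟩
      exact ⟨hj.1, (hp j (mem_Icc.2 hj)).1 hpj⟩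
    · rintro ⟨hj1, hjk⟩
      exact ⟨⟨hj1, hjk.trans hk⟩, (hp j (mem_Icc.2 ⟨hj1, hjk.trans hk⟩)).2 hjk⟩
  rw [hfilter, Nat.card_Icc, Nat.add_sub_cancel]

lemma sum_Icc_eq_sub_one_of_eq_one {M : Type*} [AddCommMonoidWithOne M] {n : ℕ} {f : ℕ → M}
    (hn : 1 ≤ n) (h1 : f 1 = 0) (hf : ∀ i ∈ Ioc 1 n, f i = 1) :
    ∑ i ∈ Icc 1 n, f i = (n - 1 : ℕ) := by
  rw [Icc_eq_cons_Ioc hn, sum_cons, h1, zero_add, sum_congr rfl hf, sum_const, Nat.card_Ioc,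
    nsmul_one]

section Staircase

variable {m : ℕ} {c : ℕ → ℕ} (hc1 : c 1 = 2 * m + 1)
  (hc2 : ∀ j, 2 ≤ j → j ≤ 2 * m + 1 → c j = 2 * m + 1 + 1 - 2 * (j / 2))

include hc1 hc2

lemma le_staircase_iff {i j : ℕ} (hi : 1 ≤ i) (hin : i ≤ 2 * m + 1) (hj : j ∈ Icc 1 (2 * m + 1)) :
    i ≤ c j ↔ j ≤ if i ≤ 2 then 2 * m + 1 else 2 * m + 1 - 2 * ((i - 1) / 2) := by
  obtain ⟨hj1, hjn⟩ := mem_Icc.1 hj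
  rcases hj1.eq_or_lt with rfl | hj2
  · rw [hc1]
    split <;> omega
  · rw [hc2 j hj2 hjn]
    split <;> omega

lemma card_le_staircase {i : ℕ} (hi : 1 ≤ i) (hin : i ≤ 2 * m + 1) :
    #{j ∈ Icc 1 (2 * m + 1) | i ≤ c j} =
      if i ≤ 2 then 2 * m + 1 else 2 * m + 1 - 2 * ((i - 1) / 2) :=
  card_filter_Icc_of_iff_le (by split <;> omega) fun _ hj => le_staircase_iff hc1 hc2 hi hin hj

lemma natAbs_sub_card_le_staircase {i : ℕ} (hi : 2 ≤ i) (hin : i ≤ 2 * m + 1) :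
    ((c i : ℤ) - #{j ∈ Icc 1 (2 * m + 1) | i ≤ c j}).natAbs = 1 := by
  rw [card_le_staircase hc1 hc2 (by omega) hin, hc2 i hi hin]
  split <;> omega

end Staircase

theorem example_one_general (n : ℕ) (hodd : Odd n)
    (c : ℕ → ℕ) (hc1 : c 1 = n)
    (hc2 : ∀ j : ℕ, 2 ≤ j → j ≤ n → c j = n + 1 - 2 * (j / 2))
    (b : ℕ → ℕ)
    (hb : ∀ i : ℕ, b i = ((Finset.Icc 1 n).filter fun j => i ≤ c j).card) :
    (∀ i : ℕ, 1 ≤ i → i ≤ n →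
        b i = if i ≤ 2 then n else n - 2 * ((i - 1) / 2)) ∧
      ∑ i ∈ Finset.Icc 1 n, ((c i : ℤ) - b i).natAbs = n - 1 := by
  obtain ⟨m, rfl⟩ := hodd
  refine ⟨fun i hi hin => (hb i).trans (card_le_staircase hc1 hc2 hi hin), ?_⟩
  refine sum_Icc_eq_sub_one_of_eq_one (by omega) ?_ fun i hi => ?_
  · rw [hb, card_le_staircase hc1 hc2 le_rfl (by omega), hc1]
    simp
  · obtain ⟨hi2, hin⟩ := mem_Ioc.1 hi
    rw [hb]
    exact natAbs_sub_card_le_staircase hc1 hc2 hi2 hin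

/-- For odd `n`, with `R = C = (n, n-1, n-1, n-3, n-3, …, 4, 4, 2, 2)` (i.e. `c 1 = n`
and `c j = n + 1 - 2⌊j/2⌋` for `2 ≤ j ≤ n`), the conjugate sequence is
`(n, n, n-2, n-2, …, 3, 3, 1)` and `2α = ∑ |cᵢ - bᵢ| = n - 1`. -/
theorem example_one (n : ℕ) (hodd : Odd n) (hn : 1 ≤ n)
    (c : ℕ → ℕ) (hc1 : c 1 = n)
    (hc2 : ∀ j : ℕ, 2 ≤ j → j ≤ n → c j = n + 1 - 2 * (j / 2))
    (b : ℕ → ℕ)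
    (hb : ∀ i : ℕ, b i = ((Finset.Icc 1 n).filter fun j => i ≤ c j).card) :
    (∀ i : ℕ, 1 ≤ i → i ≤ n →
        b i = if i ≤ 2 then n else n - 2 * ((i - 1) / 2)) ∧
      ∑ i ∈ Finset.Icc 1 n, ((c i : ℤ) - b i).natAbs = n - 1 :=
  example_one_general n hodd c hc1 hc2 b hb
end

section
/- For a positive integer k, with m = n = 2k+1 and R = C = (2k+1, k+1, k+1, ..., k+1), one has b_i = 2k+1 for i ≤ k+1 and b_i = 1 for i ≥ k+2, d_1 = 0, d_i = k for 2 ≤ i ≤ k+1, d_i = −k for k+2 ≤ i ≤ 2k+1, and α = k² = (m−1)(n−1)/4. Thus the bound α ≤ (m−1)(n−1)/4 is attained. -/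
open Finset

/-! The column sums are `c 1 = 2k+1` and `c j = k+1` otherwise, so every column reaches
height `k+1` while only the first reaches beyond it: the conjugate `b` is `2k+1` up to `k+1`
and `1` after. Hence `|dᵢ| = k` for every `i ≥ 2`, and `d 1 = 0`. -/

section

variable {k : ℕ} {c : ℕ → ℕ} (hc1 : c 1 = 2 * k + 1)
  (hc2 : ∀ j : ℕ, 2 ≤ j → j ≤ 2 * k + 1 → c j = k + 1)
include hc1 hc2

theorem filter_le_eq_Icc {i : ℕ} (hi : i ≤ k + 1) :
    (Icc 1 (2 * k + 1)).filter (fun j => i ≤ c j) = Icc 1 (2 * k + 1) := by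
  refine filter_true_of_mem fun j hj => ?_
  obtain ⟨hj1, hj2⟩ := mem_Icc.mp hj
  rcases hj1.eq_or_lt with rfl | hj1
  · omega
  · rw [hc2 j hj1 hj2]; omega

theorem filter_le_eq_singleton_one {i : ℕ} (hi1 : k + 2 ≤ i) (hi2 : i ≤ 2 * k + 1) :
    (Icc 1 (2 * k + 1)).filter (fun j => i ≤ c j) = {1} := by
  ext j
  simp only [mem_filter, mem_Icc, mem_singleton]
  constructor
  · rintro ⟨⟨hj1, hj2⟩, hij⟩
    by_contra hj
    rw [hc2 j (by omega) hj2] at hij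
    omega
  · rintro rfl
    omega

end

theorem sum_Icc_one_eq_of_eq_const {f : ℕ → ℕ} {n a : ℕ} (h1 : f 1 = 0)
    (h : ∀ i : ℕ, 2 ≤ i → i ≤ n → f i = a) : ∑ i ∈ Icc 1 n, f i = (n - 1) * a := by
  rcases Nat.eq_zero_or_pos n with rfl | hn
  · simp
  have h_const : ∀ i ∈ Icc (1 + 1) n, f i = a :=
    fun i hi => h i (mem_Icc.mp hi).1 (mem_Icc.mp hi).2
  rw [← insert_Icc_add_one_left_eq_Icc hn, sum_insert (by simp), h1, zero_add,
    sum_const_nat h_const, Nat.card_Icc]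
  rfl

theorem example_alpha_max_general (k : ℕ)
    (c : ℕ → ℕ) (hc1 : c 1 = 2 * k + 1)
    (hc2 : ∀ j : ℕ, 2 ≤ j → j ≤ 2 * k + 1 → c j = k + 1)
    (b : ℕ → ℕ)
    (hb : ∀ i : ℕ, b i = ((Finset.Icc 1 (2 * k + 1)).filter fun j => i ≤ c j).card)
    (d : ℕ → ℤ) (hd : ∀ i : ℕ, d i = (b i : ℤ) - c i) :
    (∀ i : ℕ, 1 ≤ i → i ≤ k + 1 → b i = 2 * k + 1) ∧
      (∀ i : ℕ, k + 2 ≤ i → i ≤ 2 * k + 1 → b i = 1) ∧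
      d 1 = 0 ∧
      (∀ i : ℕ, 2 ≤ i → i ≤ k + 1 → d i = (k : ℤ)) ∧
      (∀ i : ℕ, k + 2 ≤ i → i ≤ 2 * k + 1 → d i = -(k : ℤ)) ∧
      (∑ i ∈ Finset.Icc 1 (2 * k + 1), (d i).natAbs = 2 * k ^ 2) ∧
      k ^ 2 = ((2 * k + 1) - 1) * ((2 * k + 1) - 1) / 4 := by
  have hb_low : ∀ i, 1 ≤ i → i ≤ k + 1 → b i = 2 * k + 1 := fun i _ hi => by
    rw [hb, filter_le_eq_Icc hc1 hc2 hi, Nat.card_Icc]; omega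
  have hb_high : ∀ i, k + 2 ≤ i → i ≤ 2 * k + 1 → b i = 1 := fun i hi1 hi2 => by
    rw [hb, filter_le_eq_singleton_one hc1 hc2 hi1 hi2, card_singleton]
  have hd_one : d 1 = 0 := by
    rw [hd, hb_low 1 le_rfl (by omega), hc1, sub_self]
  have hd_low : ∀ i, 2 ≤ i → i ≤ k + 1 → d i = k := fun i hi1 hi2 => by
    rw [hd, hb_low i (by omega) hi2, hc2 i hi1 (by omega)]; push_cast; ring
  have hd_high : ∀ i, k + 2 ≤ i → i ≤ 2 * k + 1 → d i = -k := fun i hi1 hi2 => by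
    rw [hd, hb_high i hi1 hi2, hc2 i (by omega) hi2]; push_cast; ring
  have hd_abs : ∀ i, 2 ≤ i → i ≤ 2 * k + 1 → (d i).natAbs = k := fun i hi1 hi2 => by
    rcases le_or_gt i (k + 1) with hi | hi
    · rw [hd_low i hi1 hi, Int.natAbs_natCast]
    · rw [hd_high i hi hi2, Int.natAbs_neg, Int.natAbs_natCast]
  refine ⟨hb_low, hb_high, hd_one, hd_low, hd_high, ?_, ?_⟩
  · rw [sum_Icc_one_eq_of_eq_const (by rw [hd_one, Int.natAbs_zero]) hd_abs, Nat.add_sub_cancel]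
    ring
  · rw [Nat.add_sub_cancel, show 2 * k * (2 * k) = 4 * k ^ 2 by ring,
      Nat.mul_div_cancel_left _ four_pos]

/-- For `m = n = 2k+1` and `R = C = (2k+1, k+1, …, k+1)`: `bᵢ = 2k+1` for `i ≤ k+1`,
`bᵢ = 1` for `i ≥ k+2`; `d 1 = 0`, `dᵢ = k` for `2 ≤ i ≤ k+1`, `dᵢ = -k` for
`k+2 ≤ i ≤ 2k+1`; and `2α = ∑ |dᵢ| = 2k²`, so `α = k² = (m-1)(n-1)/4` and the bound
`α ≤ (m-1)(n-1)/4` is attained. -/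
theorem example_alpha_max (k : ℕ) (hk : 1 ≤ k)
    (c : ℕ → ℕ) (hc1 : c 1 = 2 * k + 1)
    (hc2 : ∀ j : ℕ, 2 ≤ j → j ≤ 2 * k + 1 → c j = k + 1)
    (b : ℕ → ℕ)
    (hb : ∀ i : ℕ, b i = ((Finset.Icc 1 (2 * k + 1)).filter fun j => i ≤ c j).card)
    (d : ℕ → ℤ) (hd : ∀ i : ℕ, d i = (b i : ℤ) - c i) :
    (∀ i : ℕ, 1 ≤ i → i ≤ k + 1 → b i = 2 * k + 1) ∧
      (∀ i : ℕ, k + 2 ≤ i → i ≤ 2 * k + 1 → b i = 1) ∧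
      d 1 = 0 ∧
      (∀ i : ℕ, 2 ≤ i → i ≤ k + 1 → d i = (k : ℤ)) ∧
      (∀ i : ℕ, k + 2 ≤ i → i ≤ 2 * k + 1 → d i = -(k : ℤ)) ∧
      (∑ i ∈ Finset.Icc 1 (2 * k + 1), (d i).natAbs = 2 * k ^ 2) ∧
      k ^ 2 = ((2 * k + 1) - 1) * ((2 * k + 1) - 1) / 4 :=
  example_alpha_max_general k c hc1 hc2 b hb d hd
end
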